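/- arXiv:hep-th/9703019 — 2 statements merged into one kernel-verified Lean document; each statement's English description precedes it below -/
import Mathlib

section
/- For odd s, the antisymmetrized multibracket [x_1,...,x_s] = Σ_{σ∈S_s} sgn(σ) x_{σ(1)}···x_{σ(s)} of associative operators does not satisfy the GJI with zero right-hand side; instead Σ_{σ∈S_{2s-1}} sgn(σ)[[x_{σ(1)},...,x_{σ(s)}],x_{σ(s+1)},...,x_{σ(2s-1)}] is proportional (with nonzero constant) to the (2s−1)-bracket [x_1,...,x_{2s-1}]. -/
/-- The fully antisymmetrized `s`-fold product in an associative algebra. -/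
noncomputable def multibracket {A : Type*} [Ring A] {s : ℕ} (x : Fin s → A) : A :=
  ∑ σ : Equiv.Perm (Fin s), (Equiv.Perm.sign σ : ℤ) • (List.ofFn fun i => x (σ i)).prod

/-- The full antisymmetrization over `2s-1` elements of the nested `s`-bracket,
for odd `s = 2p+1` (so `2s-1 = (2p+1)+(2p)`). -/
noncomputable def nestedGJISum (p : ℕ) (A : Type*) [Ring A]
    (x : Fin ((2 * p + 1) + (2 * p)) → A) : A :=
  ∑ σ : Equiv.Perm (Fin ((2 * p + 1) + (2 * p))),
    (Equiv.Perm.sign σ : ℤ) •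
      multibracket
        (Fin.cons (multibracket fun i : Fin (2 * p + 1) => x (σ (Fin.castAdd (2 * p) i)))
          (fun j : Fin (2 * p) => x (σ (Fin.natAdd (2 * p + 1) j))))

/-!
Expanding both brackets writes `[[y₀, …, y_{s-1}], y_s, …, y_{2s-2}]` as a signed sum of words
`y_{π 0} ⋯ y_{π (2s-2)}`, one for each inner permutation `ρ`, position `k` of the inner block in
the outer word and order `e` of the remaining letters; the coefficient is
`sign ρ * sign e * (-1) ^ k`. Antisymmetrizing the word of `π` gives `sign π` times the
`(2s-1)`-bracket. Flattening a block of length `s` at position `k` has sign `(-1) ^ (s * k)`,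
which for odd `s` cancels `(-1) ^ k`, so each of the `s! * s!` terms contributes `+1`.
The `(2s-1)`-bracket of the generators of the free algebra is nonzero, hence so is the sum.
-/

open Equiv Equiv.Perm
open scoped Nat

section Combinatorics

variable {α : Type*}

theorem finRotate_pow_apply_val {N : ℕ} (j : ℕ) (i : Fin N) :
    ((finRotate N ^ j) i : ℕ) = (i + j) % N := by
  induction j with
  | zero => simp [Nat.mod_eq_of_lt i.isLt]
  | succ j ih =>
    have := i.neZero
    rw [pow_succ', Perm.mul_apply, finRotate_apply, Fin.val_add, Fin.val_one', ih,
      Nat.add_mod_mod, Nat.mod_add_mod, add_assoc]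

/-- Precomposing `Fin.append z u` with this permutation moves the block `z` to position `k`
among the letters of `u`. -/
def insertBlockPerm (a b : ℕ) (k : Fin (b + 1)) : Perm (Fin (a + b)) :=
  (finRotate (a + k) ^ a).extendDomain (Fin.castLEEmb (by omega : a + k ≤ a + b)).toEquivRange

theorem sign_insertBlockPerm (a b : ℕ) (k : Fin (b + 1)) :
    sign (insertBlockPerm a b k) = (-1) ^ (a * k) := by
  rw [insertBlockPerm, sign_extendDomain, map_pow]
  rcases a with _ | a
  · simp
  · rw [show a + 1 + (k : ℕ) = a + k + 1 by omega, sign_finRotate, ← pow_mul, Nat.add_sub_cancel,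
      show (a + k) * (a + 1) = (a + 1) * k + a * (a + 1) by ring, pow_add,
      (Nat.even_mul_succ_self a).neg_one_pow, mul_one]

theorem insertBlockPerm_apply_val (a b : ℕ) (k : Fin (b + 1)) (i : Fin (a + b)) :
    (insertBlockPerm a b k i : ℕ) = if (i : ℕ) < a + k then (i + a) % (a + k) else i := by
  split_ifs with hi
  · have : i = (Fin.castLEEmb (by omega : a + k ≤ a + b)).toEquivRange ⟨i, hi⟩ := rfl
    rw [insertBlockPerm, this, extendDomain_apply_image, Function.Embedding.toEquivRange_apply,
      Function.Embedding.toEquivRange_apply]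
    simp only [Fin.castLEEmb_apply, Fin.val_castLE, finRotate_pow_apply_val]
  · rw [insertBlockPerm, extendDomain_apply_not_subtype]
    simpa using hi

theorem List.ofFn_insertNth {n : ℕ} (k : Fin (n + 1)) (b : α) (u : Fin n → α) :
    List.ofFn (Fin.insertNth k b u) = (List.ofFn u).take k ++ b :: (List.ofFn u).drop k := by
  induction n with
  | zero => simp [Fin.fin_one_eq_zero k, Fin.insertNth_zero']
  | succ n ih =>
    cases k using Fin.cases with
    | zero => simp [Fin.insertNth_zero']
    | succ k =>
      cases u using Fin.consCases with
      | cons u₀ u =>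
        simp only [Fin.insertNth_succ_cons, List.ofFn_cons, Fin.val_succ, List.take_succ_cons,
          List.drop_succ_cons, ih, List.cons_append]

theorem List.ofFn_append_comp_insertBlockPerm {a b : ℕ} (z : Fin a → α) (u : Fin b → α)
    (k : Fin (b + 1)) :
    List.ofFn (Fin.append z u ∘ insertBlockPerm a b k) =
      (List.ofFn u).take k ++ List.ofFn z ++ (List.ofFn u).drop k := by
  have hk := k.is_le
  refine List.ext_getElem (by simp; omega) fun i h₁ _ => ?_
  have hi : i < a + b := by simpa using h₁
  simp only [List.getElem_ofFn, Function.comp_apply, List.getElem_append, List.getElem_take,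
    List.getElem_drop, List.length_append, List.length_take, List.length_ofFn, min_eq_left hk]
  split_ifs with h h'
  · have : insertBlockPerm a b k ⟨i, hi⟩ = Fin.natAdd a ⟨i, by omega⟩ := by
      ext
      rw [insertBlockPerm_apply_val, if_pos (by simp; omega)]
      simp only [Fin.val_natAdd]
      rw [Nat.mod_eq_of_lt (by omega)]
      omega
    rw [this, Fin.append_right]
  · have : insertBlockPerm a b k ⟨i, hi⟩ = Fin.castAdd b ⟨i - k, by omega⟩ := by
      ext
      rw [insertBlockPerm_apply_val, if_pos (by simp; omega)]
      simp only [Fin.val_castAdd]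
      rw [Nat.mod_eq_sub_mod (by omega), Nat.mod_eq_of_lt (by omega)]
      omega
    rw [this, Fin.append_left]
  · have : insertBlockPerm a b k ⟨i, hi⟩ = Fin.natAdd a ⟨k + (i - (k + a)), by omega⟩ := by
      ext
      rw [insertBlockPerm_apply_val, if_neg (by simp; omega)]
      simp only [Fin.val_natAdd]
      omega
    rw [this, Fin.append_right]

def appendPerm {a b : ℕ} (ρ : Perm (Fin a)) (e : Perm (Fin b)) : Perm (Fin (a + b)) :=
  finSumFinEquiv.permCongr (Perm.sumCongr ρ e)

theorem sign_appendPerm {a b : ℕ} (ρ : Perm (Fin a)) (e : Perm (Fin b)) :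
    sign (appendPerm ρ e) = sign ρ * sign e := by
  rw [appendPerm, sign_permCongr, sign_sumCongr]

theorem append_comp_eq_comp_appendPerm {a b : ℕ} (y : Fin (a + b) → α)
    (ρ : Perm (Fin a)) (e : Perm (Fin b)) :
    Fin.append (y ∘ Fin.castAdd b ∘ ρ) (y ∘ Fin.natAdd a ∘ e) = y ∘ appendPerm ρ e := by
  funext i
  cases i using Fin.addCases <;> simp [appendPerm, permCongr_apply]

theorem cons_comp_decomposeFin_symm_zero {m : ℕ} (b : α) (u : Fin m → α) (e : Perm (Fin m)) :
    (Fin.cons b u : Fin (m + 1) → α) ∘ decomposeFin.symm (0, e) = Fin.cons b (u ∘ e) := by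
  funext i
  cases i using Fin.cases <;> simp [decomposeFin_symm_apply_zero, decomposeFin_symm_apply_succ]

noncomputable def cycleRangeProdEquiv (m : ℕ) : Fin (m + 1) × Perm (Fin m) ≃ Perm (Fin (m + 1)) :=
  Equiv.ofBijective (fun ke => decomposeFin.symm (0, ke.2) * ke.1.cycleRange) <| by
    refine (Fintype.bijective_iff_injective_and_card _).2 ⟨?_, by
      simp [Fintype.card_perm, Nat.factorial_succ]⟩
    rintro ⟨k, e⟩ ⟨k', e'⟩ h
    have hk : k = k' := by
      have h0 : ∀ e : Perm (Fin m), (decomposeFin.symm (0, e)).symm 0 = 0 := fun e =>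
        (Equiv.symm_apply_eq _).2 (decomposeFin_symm_apply_zero 0 e).symm
      simpa [h0] using congrArg (fun τ : Perm (Fin (m + 1)) => τ⁻¹ 0) h
    subst hk
    have := decomposeFin.symm.injective (mul_right_cancel h)
    simp_all

end Combinatorics

section Words

variable {M : Type*} [Monoid M]

theorem prod_ofFn_insertNth {n : ℕ} (k : Fin (n + 1)) (b : M) (u : Fin n → M) :
    (List.ofFn (Fin.insertNth k b u)).prod =
      ((List.ofFn u).take k).prod * b * ((List.ofFn u).drop k).prod := by
  rw [List.ofFn_insertNth, List.prod_append, List.prod_cons, mul_assoc]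

theorem prod_ofFn_insertNth_prod_ofFn {a b : ℕ} (k : Fin (b + 1)) (z : Fin a → M)
    (u : Fin b → M) :
    (List.ofFn (Fin.insertNth k (List.ofFn z).prod u)).prod =
      (List.ofFn (Fin.append z u ∘ insertBlockPerm a b k)).prod := by
  rw [prod_ofFn_insertNth, List.ofFn_append_comp_insertBlockPerm, List.prod_append,
    List.prod_append]

theorem FreeMonoid.prod_ofFn_of {α : Type*} {n : ℕ} (f : Fin n → α) :
    (List.ofFn fun i => FreeMonoid.of (f i)).prod = FreeMonoid.ofList (List.ofFn f) := by
  induction n with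
  | zero => rfl
  | succ n ih => simp [List.ofFn_succ, FreeMonoid.ofList_cons, ih]

end Words

section Multibracket

variable {A : Type*} [Ring A]

theorem multibracket_cons {m : ℕ} (b : A) (u : Fin m → A) :
    multibracket (Fin.cons b u : Fin (m + 1) → A) =
      ∑ k : Fin (m + 1), ∑ e : Perm (Fin m),
        ((sign e * (-1) ^ (k : ℕ) : ℤˣ) : ℤ) • (List.ofFn (Fin.insertNth k b (u ∘ e))).prod := by
  rw [multibracket, ← (cycleRangeProdEquiv m).sum_comp, Fintype.sum_prod_type]
  refine Finset.sum_congr rfl fun k _ => Finset.sum_congr rfl fun e _ => ?_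
  have hsign : sign (cycleRangeProdEquiv m (k, e)) = sign e * (-1) ^ (k : ℕ) := by
    simp [cycleRangeProdEquiv, decomposeFin.symm_sign, Fin.sign_cycleRange]
  have hword : (fun i => (Fin.cons b u : Fin (m + 1) → A) (cycleRangeProdEquiv m (k, e) i)) =
      Fin.insertNth k b (u ∘ e) := by
    rw [← Fin.cons_comp_cycleRange, ← cons_comp_decomposeFin_symm_zero]
    rfl
  rw [hsign, hword]

theorem sum_sign_smul_prod_ofFn_comp_mul {n : ℕ} (x : Fin n → A) (π : Perm (Fin n)) :
    ∑ σ : Perm (Fin n), (sign σ : ℤ) • (List.ofFn (x ∘ ⇑(σ * π))).prod =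
      (sign π : ℤ) • multibracket x := by
  rw [multibracket, Finset.smul_sum]
  refine Fintype.sum_equiv (Equiv.mulRight π) _ _ fun σ => ?_
  rw [coe_mulRight, smul_smul, map_mul, Units.val_mul, mul_left_comm, Int.units_coe_mul_self,
    mul_one]
  rfl

theorem sum_sign_smul_eq_smul_multibracket {n : ℕ} {T : Type*} [Fintype T]
    (F : (Fin n → A) → A) (c : T → ℤ) (π : T → Perm (Fin n))
    (hF : ∀ y, F y = ∑ t, c t • (List.ofFn (y ∘ π t)).prod) (x : Fin n → A) :
    ∑ σ : Perm (Fin n), (sign σ : ℤ) • F (x ∘ σ) =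
      (∑ t, c t * (sign (π t) : ℤ)) • multibracket x := by
  simp_rw [hF, Finset.smul_sum, Finset.sum_smul, mul_smul, ← sum_sign_smul_prod_ofFn_comp_mul,
    Finset.smul_sum]
  rw [Finset.sum_comm]
  refine Finset.sum_congr rfl fun t _ => Finset.sum_congr rfl fun σ _ => ?_
  rw [smul_comm]
  rfl

/-- The nested bracket `[[y₀, …, y_{a-1}], y_a, …, y_{a+b-1}]`. -/
noncomputable def nestedBracket {a b : ℕ} (y : Fin (a + b) → A) : A :=
  multibracket (Fin.cons (multibracket (y ∘ Fin.castAdd b)) (y ∘ Fin.natAdd a) : Fin (b + 1) → A)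

theorem nestedBracket_eq_sum {a b : ℕ} (y : Fin (a + b) → A) :
    nestedBracket y = ∑ t : (Fin (b + 1) × Perm (Fin b)) × Perm (Fin a),
      ((sign t.2 * (sign t.1.2 * (-1) ^ (t.1.1 : ℕ)) : ℤˣ) : ℤ) •
        (List.ofFn (y ∘ ⇑(appendPerm t.2 t.1.2 * insertBlockPerm a b t.1.1))).prod := by
  simp only [nestedBracket, multibracket_cons, Fintype.sum_prod_type]
  refine Finset.sum_congr rfl fun k _ => Finset.sum_congr rfl fun e _ => ?_
  rw [multibracket, prod_ofFn_insertNth, Finset.mul_sum, Finset.sum_mul, Finset.smul_sum]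
  refine Finset.sum_congr rfl fun ρ _ => ?_
  rw [mul_smul_comm, smul_mul_assoc, ← prod_ofFn_insertNth, smul_smul, mul_comm,
    prod_ofFn_insertNth_prod_ofFn, Perm.coe_mul, ← Function.comp_assoc,
    ← append_comp_eq_comp_appendPerm]
  push_cast
  rfl

theorem sum_sign_smul_nestedBracket {a b : ℕ} (ha : Odd a) (x : Fin (a + b) → A) :
    ∑ σ : Perm (Fin (a + b)), (sign σ : ℤ) • nestedBracket (x ∘ σ) =
      ((a ! * (b + 1)! : ℕ) : ℤ) • multibracket x := by
  rw [sum_sign_smul_eq_smul_multibracket _ _ _ nestedBracket_eq_sum]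
  congr 1
  have hterm : ∀ t : (Fin (b + 1) × Perm (Fin b)) × Perm (Fin a),
      ((sign t.2 * (sign t.1.2 * (-1) ^ (t.1.1 : ℕ)) : ℤˣ) : ℤ) *
        (sign (appendPerm t.2 t.1.2 * insertBlockPerm a b t.1.1) : ℤ) = 1 := by
    rintro ⟨⟨k, e⟩, ρ⟩
    have hk : ((-1) ^ (k : ℕ) * (-1) ^ (a * k) : ℤˣ) = 1 := by
      rw [← pow_add, show (k : ℕ) + a * k = (a + 1) * k by ring]
      exact (ha.add_one.mul_right _).neg_one_pow
    rw [← Units.val_mul, Perm.sign_mul, sign_appendPerm, sign_insertBlockPerm,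
      show sign ρ * (sign e * (-1) ^ (k : ℕ)) * (sign ρ * sign e * (-1) ^ (a * k)) =
        (sign ρ * sign ρ) * (sign e * sign e) * ((-1) ^ (k : ℕ) * (-1) ^ (a * k)) by ac_rfl,
      Int.units_mul_self, Int.units_mul_self, hk]
    rfl
  rw [Finset.sum_congr rfl fun t _ => hterm t]
  simp [Fintype.card_perm, Nat.factorial_succ]
  ring

theorem multibracket_freeMonoid_of_ne_zero (n : ℕ) :
    multibracket (fun i : Fin n => MonoidAlgebra.of ℤ (FreeMonoid (Fin n)) (FreeMonoid.of i))
      ≠ 0 := by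
  set word : Perm (Fin n) → FreeMonoid (Fin n) := fun σ => FreeMonoid.ofList (List.ofFn σ)
  have hword : ∀ σ : Perm (Fin n),
      (List.ofFn fun i => MonoidAlgebra.of ℤ (FreeMonoid (Fin n)) (FreeMonoid.of (σ i))).prod =
        MonoidAlgebra.single (word σ) 1 := fun σ => by
    rw [← Function.comp_def (MonoidAlgebra.of ℤ _), ← List.map_ofFn, ← map_list_prod,
      FreeMonoid.prod_ofFn_of, MonoidAlgebra.of_apply]
  have hword_inj : ∀ σ, σ ≠ 1 → word 1 ≠ word σ := fun σ hσ h =>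
    hσ (DFunLike.coe_injective (List.ofFn_injective (FreeMonoid.ofList.injective h))).symm
  intro h
  have := congrArg (fun y => y.coeff (word 1)) h
  simp only [multibracket, hword, MonoidAlgebra.coeff_sum, MonoidAlgebra.coeff_smul,
    MonoidAlgebra.coeff_single, MonoidAlgebra.coeff_zero, Finsupp.coe_finsetSum, Finset.sum_apply,
    Finsupp.smul_apply] at this
  rw [Finset.sum_eq_single 1
    (fun σ _ hσ => by rw [Finsupp.single_eq_of_ne (hword_inj σ hσ), smul_zero]) (by simp)] at this
  simp at this

end Multibracket

/-- for odd `s = 2p+1` the antisymmetrized multibracket does not satisfy the GJI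
with zero right-hand side; instead the antisymmetrized nested sum is proportional, with a
nonzero integer constant (depending only on `s`), to the single `(2s-1)`-fold bracket. -/
theorem odd_multibracket_GJI_proportional (p : ℕ) :
    (¬ ∀ (A : Type) [Ring A] (x : Fin ((2 * p + 1) + (2 * p)) → A), nestedGJISum p A x = 0) ∧
    ∃ c : ℤ, c ≠ 0 ∧
      ∀ (A : Type) [Ring A] (x : Fin ((2 * p + 1) + (2 * p)) → A),
        nestedGJISum p A x = c • multibracket x := by
  have key : ∀ (A : Type) [Ring A] (x : Fin ((2 * p + 1) + (2 * p)) → A),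
      nestedGJISum p A x = (((2 * p + 1)! * (2 * p + 1)! : ℕ) : ℤ) • multibracket x :=
    fun A _ x => sum_sign_smul_nestedBracket (odd_two_mul_add_one p) x
  have hc : (((2 * p + 1)! * (2 * p + 1)! : ℕ) : ℤ) ≠ 0 := by positivity
  refine ⟨fun h => ?_, _, hc, key⟩
  have := h (MonoidAlgebra ℤ (FreeMonoid (Fin _)))
    (fun i => MonoidAlgebra.of ℤ _ (FreeMonoid.of i))
  rw [key] at this
  exact smul_ne_zero hc (multibracket_freeMonoid_of_ne_zero _) this
end

section
/- A Nambu-Poisson tensor of even order 2p on a manifold M, viewed as a 2p-multivector Λ, satisfies [Λ,Λ] = 0 for the Schouten–Nijenhuis bracket, i.e., every even-order Nambu-Poisson tensor defines a generalized Poisson structure. -/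
open Equiv Equiv.Perm Fin Function

-- update of snoc at last
theorem update_snoc_last' {α : Type*} {m : ℕ} (f : Fin m → α) (c ρ : α) :
    Function.update (Fin.snoc f c : Fin (m+1) → α) (Fin.last m) ρ = (Fin.snoc f ρ : Fin (m+1) → α) := by
  funext a
  refine Fin.lastCases ?_ (fun i => ?_) a
  · simp
  · rw [Function.update_of_ne (Fin.castSucc_lt_last i).ne, Fin.snoc_castSucc, Fin.snoc_castSucc]

/-- the cycle sending `k` to `last` and `succAbove k a` to `castSucc a`. -/
def sigmaK {n : ℕ} (k : Fin (n + 1)) : Equiv.Perm (Fin (n + 1)) :=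
  Fin.revPerm.trans (k.rev.cycleRange.trans Fin.revPerm)

theorem sigmaK_self {n : ℕ} (k : Fin (n + 1)) : sigmaK k k = Fin.last n := by
  simp [sigmaK, Fin.cycleRange_self, Fin.rev_zero]

theorem sigmaK_succAbove {n : ℕ} (k : Fin (n + 1)) (a : Fin n) :
    sigmaK k (k.succAbove a) = Fin.castSucc a := by
  rcases Nat.lt_or_ge (Fin.castSucc a : ℕ) (k : ℕ) with h | h
  · have h' : Fin.castSucc a < k := h
    rw [Fin.succAbove_of_castSucc_lt _ _ h']
    simp only [sigmaK, Equiv.trans_apply, Fin.revPerm_apply]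
    rw [Fin.cycleRange_of_gt (by rwa [Fin.rev_lt_rev]), Fin.rev_rev]
  · have h' : k ≤ Fin.castSucc a := h
    rw [Fin.succAbove_of_le_castSucc _ _ h']
    simp only [sigmaK, Equiv.trans_apply, Fin.revPerm_apply]
    have hk : k < a.succ := lt_of_le_of_lt h' (Fin.castSucc_lt_succ (i := a))
    rw [Fin.cycleRange_of_lt (by rwa [Fin.rev_lt_rev]), Fin.rev_succ,
      Fin.coeSucc_eq_succ, Fin.rev_succ, Fin.rev_rev]

theorem update_eq_snoc_comp {α : Type*} {n : ℕ} (j : Fin (n + 1) → α) (k : Fin (n + 1)) (ρ : α) :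
    Function.update j k ρ = (Fin.snoc (j ∘ k.succAbove) ρ : Fin (n+1) → α) ∘ (sigmaK k) := by
  funext z
  rcases eq_or_ne z k with rfl | hz
  · simp [sigmaK_self]
  · obtain ⟨a, rfl⟩ := Fin.exists_succAbove_eq hz
    rw [Function.update_of_ne hz, Function.comp_apply, sigmaK_succAbove, Fin.snoc_castSucc,
      Function.comp_apply]

/-- extend a permutation of `Fin n` to `Fin (m + n)`, acting on the `natAdd` block. -/
def extPerm (m : ℕ) {n : ℕ} (p : Equiv.Perm (Fin n)) : Equiv.Perm (Fin (m + n)) :=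
  finSumFinEquiv.permCongr ((Equiv.refl (Fin m)).sumCongr p)

theorem extPerm_castAdd (m : ℕ) {n : ℕ} (p : Equiv.Perm (Fin n)) (a : Fin m) :
    extPerm m p (Fin.castAdd n a) = Fin.castAdd n a := by
  simp [extPerm, Equiv.permCongr_apply]

theorem extPerm_natAdd (m : ℕ) {n : ℕ} (p : Equiv.Perm (Fin n)) (b : Fin n) :
    extPerm m p (Fin.natAdd m b) = Fin.natAdd m (p b) := by
  simp [extPerm, Equiv.permCongr_apply]

theorem sign_extPerm (m : ℕ) {n : ℕ} (p : Equiv.Perm (Fin n)) :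
    Equiv.Perm.sign (extPerm m p) = Equiv.Perm.sign p := by
  simp [extPerm, Equiv.Perm.sign_permCongr, Equiv.Perm.sign_sumCongr]

/-- extend a permutation of `Fin M` to `Fin (M + 1)`, fixing the last element. -/
def extLast {M : ℕ} (p : Equiv.Perm (Fin M)) : Equiv.Perm (Fin (M + 1)) :=
  finSumFinEquiv.permCongr (p.sumCongr (Equiv.refl (Fin 1)))

theorem extLast_castSucc {M : ℕ} (p : Equiv.Perm (Fin M)) (a : Fin M) :
    extLast p (Fin.castSucc a) = Fin.castSucc (p a) := by
  have : (Fin.castSucc a : Fin (M+1)) = finSumFinEquiv (Sum.inl a) := rfl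
  simp [extLast, Equiv.permCongr_apply, this]
  rfl

theorem extLast_last {M : ℕ} (p : Equiv.Perm (Fin M)) :
    extLast p (Fin.last M) = Fin.last M := by
  have : (Fin.last M : Fin (M+1)) = finSumFinEquiv (Sum.inr (0 : Fin 1)) := by
    apply Fin.ext; simp
  rw [this]
  simp only [extLast, Equiv.permCongr_apply, Equiv.symm_apply_apply, Equiv.sumCongr_apply,
    Sum.map_inr, Equiv.refl_apply]

theorem sign_extLast {M : ℕ} (p : Equiv.Perm (Fin M)) :
    Equiv.Perm.sign (extLast p) = Equiv.Perm.sign p := by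
  simp [extLast, Equiv.Perm.sign_permCongr, Equiv.Perm.sign_sumCongr]

theorem finRotate_pow_val {N : ℕ} (t : ℕ) (x : Fin (N + 1)) :
    ((((finRotate (N + 1)) ^ t) x : Fin (N + 1)) : ℕ) = (x + t) % (N + 1) := by
  induction t generalizing x with
  | zero => simp [Nat.mod_eq_of_lt x.isLt]
  | succ t ih =>
      rw [pow_succ, Equiv.Perm.mul_apply, ih, finRotate_succ_apply]
      have h2 : ((x + 1 : Fin (N+1)) : ℕ) = (x.val + 1 % (N+1)) % (N+1) := by
        rw [Fin.add_def]; simp [Fin.val_one']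
      rw [h2, Nat.mod_add_mod]
      have h1 : (x.val + 1 % (N+1) + t) ≡ (x.val + 1 + t) [MOD (N+1)] :=
        Nat.ModEq.add_right _ (Nat.ModEq.add_left _ (Nat.mod_modEq 1 (N+1)))
      calc (x.val + 1 % (N+1) + t) % (N+1)
          = (x.val + 1 + t) % (N+1) := h1
        _ = (x.val + (t+1)) % (N+1) := by congr 1; omega

/-- rotation by `2q+1` on `Fin (4q+2)`. -/
def rotQ (q : ℕ) : Equiv.Perm (Fin ((2*q+1) + (2*q+1))) :=
  (finRotate ((2*q+1) + (2*q+1))) ^ (2*q+1)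

theorem rotQ_val (q : ℕ) (x : Fin ((2*q+1) + (2*q+1))) :
    ((rotQ q x : Fin _) : ℕ) = (x + (2*q+1)) % ((2*q+1) + (2*q+1)) :=
  finRotate_pow_val (N := (2*q+1) + 2*q) (2*q+1) x

theorem sign_rotQ (q : ℕ) : Equiv.Perm.sign (rotQ q) = -1 := by
  rw [rotQ, map_pow, show (2*q+1) + (2*q+1) = ((2*q+1) + 2*q) + 1 by omega,
    sign_finRotate]
  have h1 : ((-1 : ℤˣ) ^ ((2*q+1) + 2*q + 1 - 1)) = -1 := Odd.neg_one_pow ⟨2*q, by omega⟩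
  rw [h1]
  exact Odd.neg_one_pow ⟨q, by ring⟩

theorem extLast_val {M : ℕ} (p : Equiv.Perm (Fin M)) (y : Fin (M + 1)) :
    ((extLast p y : Fin (M + 1)) : ℕ) =
      if h : (y : ℕ) < M then ((p ⟨y, h⟩ : Fin M) : ℕ) else M := by
  refine Fin.lastCases ?_ (fun x => ?_) y
  · rw [extLast_last, Fin.val_last, dif_neg (lt_irrefl M)]
  · have hx : ((Fin.castSucc x : Fin (M+1)) : ℕ) < M := x.isLt
    rw [extLast_castSucc, dif_pos hx]
    rfl

/-- block swap: first `2q+1` ↔ next `2q+1`, fixing the last element. -/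
def betaQ (q : ℕ) : Equiv.Perm (Fin ((2*q+1) + (2*q+2))) := extLast (rotQ q)

theorem sign_betaQ (q : ℕ) : Equiv.Perm.sign (betaQ q) = -1 := by
  have h := sign_extLast (rotQ q)
  rw [sign_rotQ] at h
  exact h

theorem betaQ_castAdd (q : ℕ) (a : Fin (2*q+1)) :
    betaQ q (Fin.castAdd (2*q+2) a) = Fin.natAdd (2*q+1) (Fin.castSucc a) := by
  apply Fin.ext
  refine (extLast_val (M := (2*q+1)+(2*q+1)) (rotQ q) (Fin.castAdd (2*q+2) a)).trans ?_
  have ha : ((Fin.castAdd (2*q+2) a : Fin ((2*q+1)+(2*q+2))) : ℕ) < (2*q+1)+(2*q+1) := by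
    have := a.isLt; simp only [Fin.coe_castAdd]; omega
  rw [dif_pos ha, rotQ_val]
  have := a.isLt
  simp only [Fin.coe_castAdd, Fin.coe_natAdd, Fin.coe_castSucc]
  rw [Nat.mod_eq_of_lt (by omega)]
  omega

theorem betaQ_natAdd_castSucc (q : ℕ) (c : Fin (2*q+1)) :
    betaQ q (Fin.natAdd (2*q+1) (Fin.castSucc c)) = Fin.castAdd (2*q+2) c := by
  apply Fin.ext
  refine (extLast_val (M := (2*q+1)+(2*q+1)) (rotQ q)
    (Fin.natAdd (2*q+1) (Fin.castSucc c))).trans ?_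
  have hc := c.isLt
  have ha : ((Fin.natAdd (2*q+1) (Fin.castSucc c) : Fin ((2*q+1)+(2*q+2))) : ℕ) <
      (2*q+1)+(2*q+1) := by
    simp only [Fin.coe_natAdd, Fin.coe_castSucc]; omega
  rw [dif_pos ha, rotQ_val]
  simp only [Fin.coe_natAdd, Fin.coe_castSucc, Fin.coe_castAdd]
  have h1 : (2*q+1) + c.val + (2*q+1) = ((2*q+1) + (2*q+1)) + c.val := by omega
  rw [h1, Nat.add_mod_left, Nat.mod_eq_of_lt (by omega)]

theorem betaQ_natAdd_last (q : ℕ) :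
    betaQ q (Fin.natAdd (2*q+1) (Fin.last (2*q+1))) = Fin.natAdd (2*q+1) (Fin.last (2*q+1)) := by
  apply Fin.ext
  refine (extLast_val (M := (2*q+1)+(2*q+1)) (rotQ q)
    (Fin.natAdd (2*q+1) (Fin.last (2*q+1)))).trans ?_
  rw [dif_neg (by simp [Fin.coe_natAdd, Fin.val_last])]
  simp [Fin.coe_natAdd, Fin.val_last]

/-- the reindexing permutation for the `k`-th term. -/
def phiK (q : ℕ) (k : Fin (2*q+2)) : Equiv.Perm (Fin ((2*q+1) + (2*q+2))) :=
  extPerm (2*q+1) (sigmaK (n := 2*q+1) k)⁻¹ * betaQ q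

theorem phiK_castAdd (q : ℕ) (k : Fin (2*q+2)) (a : Fin (2*q+1)) :
    phiK q k (Fin.castAdd (2*q+2) a) = Fin.natAdd (2*q+1) (k.succAbove a) := by
  rw [phiK, Equiv.Perm.mul_apply, betaQ_castAdd, extPerm_natAdd]
  congr 1
  rw [← sigmaK_succAbove (n := 2*q+1) k a, ← Equiv.Perm.mul_apply, inv_mul_cancel, Equiv.Perm.one_apply]

theorem phiK_natAdd_castSucc (q : ℕ) (k : Fin (2*q+2)) (c : Fin (2*q+1)) :
    phiK q k (Fin.natAdd (2*q+1) (Fin.castSucc c)) = Fin.castAdd (2*q+2) c := by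
  rw [phiK, Equiv.Perm.mul_apply, betaQ_natAdd_castSucc, extPerm_castAdd]

theorem phiK_natAdd_last (q : ℕ) (k : Fin (2*q+2)) :
    phiK q k (Fin.natAdd (2*q+1) (Fin.last (2*q+1))) = Fin.natAdd (2*q+1) k := by
  rw [phiK, Equiv.Perm.mul_apply, betaQ_natAdd_last, extPerm_natAdd]
  congr 1
  rw [← sigmaK_self (n := 2*q+1) k, ← Equiv.Perm.mul_apply, inv_mul_cancel, Equiv.Perm.one_apply]

theorem sign_phiK_mul_sign_sigmaK (q : ℕ) (k : Fin (2*q+2)) :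
    Equiv.Perm.sign (phiK q k) * Equiv.Perm.sign (sigmaK (n := 2*q+1) k) = -1 := by
  rw [phiK, map_mul, sign_extPerm, map_inv, sign_betaQ]
  generalize Equiv.Perm.sign (sigmaK (n := 2*q+1) k) = u
  rw [Int.units_inv_eq_self u]
  rw [mul_comm u (-1), mul_assoc, Int.units_mul_self, mul_one]

theorem usl {d : ℕ} (q : ℕ) (f : Fin (2*q+1) → Fin d) (c ρ : Fin d) :
    Function.update (Fin.snoc f c : Fin (2*q+2) → Fin d) (Fin.last (2*q+1)) ρ =
      (Fin.snoc f ρ : Fin (2*q+2) → Fin d) := update_snoc_last' f c ρ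

theorem ues {d : ℕ} (q : ℕ) (j : Fin (2*q+2) → Fin d) (k : Fin (2*q+2)) (ρ : Fin d) :
    Function.update j k ρ =
      (Fin.snoc (j ∘ (Fin.succAbove k)) ρ : Fin (2*q+2) → Fin d) ∘ (sigmaK (n := 2*q+1) k) :=
  update_eq_snoc_comp j k ρ

/-- The partial derivative `∂^ρ f`. -/
noncomputable def pd {d : ℕ} (ρ : Fin d) (f : (Fin d → ℝ) → ℝ) : (Fin d → ℝ) → ℝ :=
  fun x => fderiv ℝ f x (Pi.single ρ 1)

/-- The Takhtajan tensor `Σ_{i₁...i_n j₁...j_n}` of a tensor `η` of order `n = 2q+2` (eq. (8)). -/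
noncomputable def SigmaTensor (q d : ℕ)
    (η : (Fin (2 * q + 2) → Fin d) → (Fin d → ℝ) → ℝ)
    (i j : Fin (2 * q + 2) → Fin d) (x : Fin d → ℝ) : ℝ :=
  η i x * η j x -
    ∑ k : Fin (2 * q + 2),
      η (Function.update i (Fin.last (2 * q + 1)) (j k)) x *
        η (Function.update j k (i (Fin.last (2 * q + 1)))) x

/-- a Nambu-Poisson tensor of even order `2p = 2q+2` on `ℝ^d` (smooth,
completely antisymmetric, satisfying the differential condition and the algebraic condition
`Σ + P(Σ) = 0`), viewed as a `2p`-multivector `Λ`, satisfies `[Λ,Λ] = 0` for the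
Schouten–Nijenhuis bracket; in coordinates `[Λ,Λ] = 0` is the generalized Poisson condition
`ε^{j₁...j_{4p-1}}_{i₁...i_{4p-1}} ω_{j₁...j_{2p-1}k} ∂^k ω_{j_{2p}...j_{4p-1}} = 0`
(eq. (10) of the paper). -/
theorem even_nambu_poisson_is_generalized_poisson (q d : ℕ)
    (η : (Fin (2 * q + 2) → Fin d) → (Fin d → ℝ) → ℝ)
    (hsmooth : ∀ idx, ContDiff ℝ (⊤ : ℕ∞) (η idx))
    (hanti : ∀ (σ : Equiv.Perm (Fin (2 * q + 2))) (idx : Fin (2 * q + 2) → Fin d)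
      (x : Fin d → ℝ), η (idx ∘ σ) x = (Equiv.Perm.sign σ : ℤ) • η idx x)
    -- differential condition (eq. (5)):
    (hdiff : ∀ (i j : Fin (2 * q + 2) → Fin d) (x : Fin d → ℝ),
      ∑ ρ : Fin d, η (Function.update i (Fin.last (2 * q + 1)) ρ) x * pd ρ (η j) x =
        ∑ k : Fin (2 * q + 2), ∑ ρ : Fin d,
          pd ρ (η (Function.update i (Fin.last (2 * q + 1)) (j k))) x *
            η (Function.update j k ρ) x)
    -- algebraic condition `Σ + P(Σ) = 0` (eq. (7)), `P` swapping `i₁` and `j₁`: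
    (halg : ∀ (i j : Fin (2 * q + 2) → Fin d) (x : Fin d → ℝ),
      SigmaTensor q d η i j x +
        SigmaTensor q d η (Function.update i 0 (j 0)) (Function.update j 0 (i 0)) x = 0) :
    -- conclusion: the generalized Poisson condition (eq. (10)):
    ∀ (J : Fin ((2 * q + 1) + (2 * q + 2)) → Fin d) (x : Fin d → ℝ),
      ∑ τ : Equiv.Perm (Fin ((2 * q + 1) + (2 * q + 2))),
        (Equiv.Perm.sign τ : ℤ) •
          ∑ ρ : Fin d,
            η (Fin.snoc (fun a : Fin (2 * q + 1) => J (τ (Fin.castAdd (2 * q + 2) a))) ρ) x *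
              pd ρ (η fun b : Fin (2 * q + 2) => J (τ (Fin.natAdd (2 * q + 1) b))) x = 0 := by
  intro J x
  -- Step 1: the fundamental (differential) identity, in `snoc` form.
  have key1 : ∀ τ : Equiv.Perm (Fin ((2 * q + 1) + (2 * q + 2))),
      (∑ ρ : Fin d, η (Fin.snoc (fun a : Fin (2*q+1) => J (τ (Fin.castAdd (2*q+2) a))) ρ) x *
        pd ρ (η fun b : Fin (2*q+2) => J (τ (Fin.natAdd (2*q+1) b))) x)
      = ∑ k : Fin (2*q+2), ∑ ρ : Fin d,
          pd ρ (η (Fin.snoc (fun a : Fin (2*q+1) => J (τ (Fin.castAdd (2*q+2) a)))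
            (J (τ (Fin.natAdd (2*q+1) k))))) x *
          η (Function.update (fun b : Fin (2*q+2) => J (τ (Fin.natAdd (2*q+1) b))) k ρ) x := by
    intro τ
    have h := hdiff (Fin.snoc (fun a : Fin (2*q+1) => J (τ (Fin.castAdd (2*q+2) a)))
        (J (τ (Fin.castAdd (2*q+2) 0)))) (fun b : Fin (2*q+2) => J (τ (Fin.natAdd (2*q+1) b))) x
    simp only [usl q] at h
    exact h
  -- Step 2: per-`k` reindexing by right multiplication with `phiK q k`.
  have key2 : ∀ k : Fin (2*q+2),
      (∑ τ : Equiv.Perm (Fin ((2 * q + 1) + (2 * q + 2))),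
        (Equiv.Perm.sign τ : ℤ) • ∑ ρ : Fin d,
          pd ρ (η (Fin.snoc (fun a : Fin (2*q+1) => J (τ (Fin.castAdd (2*q+2) a)))
            (J (τ (Fin.natAdd (2*q+1) k))))) x *
          η (Function.update (fun b : Fin (2*q+2) => J (τ (Fin.natAdd (2*q+1) b))) k ρ) x)
      = ∑ σ : Equiv.Perm (Fin ((2 * q + 1) + (2 * q + 2))),
          ((Equiv.Perm.sign (σ * (phiK q k)⁻¹) *
              Equiv.Perm.sign (sigmaK (n := 2*q+1) k) : ℤˣ) : ℤ) •
            ∑ ρ : Fin d,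
              pd ρ (η fun b : Fin (2*q+2) => J (σ (Fin.natAdd (2*q+1) b))) x *
                η (Fin.snoc (fun a : Fin (2*q+1) => J (σ (Fin.castAdd (2*q+2) a))) ρ) x := by
    intro k
    refine Fintype.sum_equiv (Equiv.mulRight (phiK q k)) _ _ (fun τ => ?_)
    simp only [Equiv.coe_mulRight, mul_inv_cancel_right]
    have hupd : ∀ ρ : Fin d,
        η (Function.update (fun b : Fin (2*q+2) => J (τ (Fin.natAdd (2*q+1) b))) k ρ) x =
          ((Equiv.Perm.sign (sigmaK (n := 2*q+1) k) : ℤˣ) : ℤ) •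
            η (Fin.snoc ((fun b : Fin (2*q+2) => J (τ (Fin.natAdd (2*q+1) b))) ∘
              (Fin.succAbove k)) ρ) x := by
      intro ρ
      rw [ues q _ k ρ, hanti]
    have hfun1 : (fun a : Fin (2*q+1) => J ((τ * phiK q k) (Fin.castAdd (2*q+2) a))) =
        (fun b : Fin (2*q+2) => J (τ (Fin.natAdd (2*q+1) b))) ∘ (Fin.succAbove k) := by
      funext a
      simp only [Equiv.Perm.mul_apply, phiK_castAdd, Function.comp_apply]
    have hfun2 : (fun b : Fin (2*q+2) => J ((τ * phiK q k) (Fin.natAdd (2*q+1) b))) =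
        Fin.snoc (fun a : Fin (2*q+1) => J (τ (Fin.castAdd (2*q+2) a)))
          (J (τ (Fin.natAdd (2*q+1) k))) := by
      funext b
      refine Fin.lastCases ?_ (fun c => ?_) b
      · simp only [Equiv.Perm.mul_apply, phiK_natAdd_last, Fin.snoc_last]
      · simp only [Equiv.Perm.mul_apply, phiK_natAdd_castSucc, Fin.snoc_castSucc]
    rw [hfun1, hfun2]
    simp only [hupd]
    rw [Finset.smul_sum, Finset.smul_sum]
    refine Finset.sum_congr rfl (fun ρ _ => ?_)
    rw [mul_smul_comm, smul_smul, Units.val_mul]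
  -- Step 3: the sign computation.
  have key3 : ∀ (k : Fin (2*q+2)) (σ : Equiv.Perm (Fin ((2 * q + 1) + (2 * q + 2)))),
      ((Equiv.Perm.sign (σ * (phiK q k)⁻¹) *
          Equiv.Perm.sign (sigmaK (n := 2*q+1) k) : ℤˣ) : ℤ) =
        -((Equiv.Perm.sign σ : ℤˣ) : ℤ) := by
    intro k σ
    have hu : (Equiv.Perm.sign (σ * (phiK q k)⁻¹) *
        Equiv.Perm.sign (sigmaK (n := 2*q+1) k) : ℤˣ) = -(Equiv.Perm.sign σ) := by
      rw [map_mul, map_inv, Int.units_inv_eq_self, mul_assoc,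
        sign_phiK_mul_sign_sigmaK, mul_neg_one]
    rw [hu, Units.val_neg]
  -- Assemble.
  have main : (∑ τ : Equiv.Perm (Fin ((2 * q + 1) + (2 * q + 2))),
      (Equiv.Perm.sign τ : ℤ) • ∑ ρ : Fin d,
        η (Fin.snoc (fun a : Fin (2*q+1) => J (τ (Fin.castAdd (2*q+2) a))) ρ) x *
          pd ρ (η fun b : Fin (2*q+2) => J (τ (Fin.natAdd (2*q+1) b))) x)
      = ∑ _k : Fin (2*q+2),
          -(∑ τ : Equiv.Perm (Fin ((2 * q + 1) + (2 * q + 2))),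
            (Equiv.Perm.sign τ : ℤ) • ∑ ρ : Fin d,
              η (Fin.snoc (fun a : Fin (2*q+1) => J (τ (Fin.castAdd (2*q+2) a))) ρ) x *
                pd ρ (η fun b : Fin (2*q+2) => J (τ (Fin.natAdd (2*q+1) b))) x) := by
    calc (∑ τ : Equiv.Perm (Fin ((2 * q + 1) + (2 * q + 2))),
        (Equiv.Perm.sign τ : ℤ) • ∑ ρ : Fin d,
          η (Fin.snoc (fun a : Fin (2*q+1) => J (τ (Fin.castAdd (2*q+2) a))) ρ) x *
            pd ρ (η fun b : Fin (2*q+2) => J (τ (Fin.natAdd (2*q+1) b))) x)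
        = ∑ τ : Equiv.Perm (Fin ((2 * q + 1) + (2 * q + 2))),
            ∑ k : Fin (2*q+2), (Equiv.Perm.sign τ : ℤ) • ∑ ρ : Fin d,
              pd ρ (η (Fin.snoc (fun a : Fin (2*q+1) => J (τ (Fin.castAdd (2*q+2) a)))
                (J (τ (Fin.natAdd (2*q+1) k))))) x *
              η (Function.update (fun b : Fin (2*q+2) => J (τ (Fin.natAdd (2*q+1) b))) k ρ) x := by
          refine Finset.sum_congr rfl (fun τ _ => ?_)
          rw [key1 τ, Finset.smul_sum]
      _ = ∑ k : Fin (2*q+2), ∑ τ : Equiv.Perm (Fin ((2 * q + 1) + (2 * q + 2))),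
            (Equiv.Perm.sign τ : ℤ) • ∑ ρ : Fin d,
              pd ρ (η (Fin.snoc (fun a : Fin (2*q+1) => J (τ (Fin.castAdd (2*q+2) a)))
                (J (τ (Fin.natAdd (2*q+1) k))))) x *
              η (Function.update (fun b : Fin (2*q+2) => J (τ (Fin.natAdd (2*q+1) b))) k ρ) x :=
          Finset.sum_comm
      _ = ∑ k : Fin (2*q+2),
            ∑ σ : Equiv.Perm (Fin ((2 * q + 1) + (2 * q + 2))),
              ((Equiv.Perm.sign (σ * (phiK q k)⁻¹) *
                  Equiv.Perm.sign (sigmaK (n := 2*q+1) k) : ℤˣ) : ℤ) •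
                ∑ ρ : Fin d,
                  pd ρ (η fun b : Fin (2*q+2) => J (σ (Fin.natAdd (2*q+1) b))) x *
                    η (Fin.snoc (fun a : Fin (2*q+1) => J (σ (Fin.castAdd (2*q+2) a))) ρ) x :=
          Finset.sum_congr rfl (fun k _ => key2 k)
      _ = ∑ _k : Fin (2*q+2),
            -(∑ τ : Equiv.Perm (Fin ((2 * q + 1) + (2 * q + 2))),
              (Equiv.Perm.sign τ : ℤ) • ∑ ρ : Fin d,
                η (Fin.snoc (fun a : Fin (2*q+1) => J (τ (Fin.castAdd (2*q+2) a))) ρ) x *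
                  pd ρ (η fun b : Fin (2*q+2) => J (τ (Fin.natAdd (2*q+1) b))) x) := by
          refine Finset.sum_congr rfl (fun k _ => ?_)
          rw [← Finset.sum_neg_distrib]
          refine Finset.sum_congr rfl (fun σ _ => ?_)
          rw [key3 k σ, neg_smul]
          congr 1
          congr 1
          exact Finset.sum_congr rfl (fun ρ _ => mul_comm _ _)
  rw [Finset.sum_const, Finset.card_univ, Fintype.card_fin] at main
  set S : ℝ := (∑ τ : Equiv.Perm (Fin ((2 * q + 1) + (2 * q + 2))),
      (Equiv.Perm.sign τ : ℤ) • ∑ ρ : Fin d,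
        η (Fin.snoc (fun a : Fin (2*q+1) => J (τ (Fin.castAdd (2*q+2) a))) ρ) x *
          pd ρ (η fun b : Fin (2*q+2) => J (τ (Fin.natAdd (2*q+1) b))) x) with hS
  have h2 : S = (2*(q:ℝ)+2) * (-S) := by
    refine main.trans ?_
    rw [nsmul_eq_mul]
    push_cast
    ring
  have h3 : (2*(q:ℝ)+3) * S = 0 := by linear_combination h2
  rcases mul_eq_zero.mp h3 with h | h
  · exfalso
    have hq : (0:ℝ) ≤ (q:ℝ) := Nat.cast_nonneg q
    linarith
  · exact h
end
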